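/- arXiv:2406.08522 — 3 statements merged into one kernel-verified Lean document; each statement's English description precedes it below -/
import Mathlib

section
/- The function g(λ) = log(1/λ) - ((1-λ)/λ)·log(1/(1-λ)) is strictly monotonically decreasing on (0, 0.5) and tends to 0 as λ → 0.5. -/
/-!
Since `log (1 / l) = -log l`, the function is `l ↦ ((1 - l) / l) log (1 - l) - log l`, whose
derivative is `-(2 l + log (1 - l)) / l²`. On `(0, 1/2)` the bound `log y ≥ 1 - 1/y` at
`y = 1 - l` gives `2 l + log (1 - l) ≥ l (1 - 2 l) / (1 - l) > 0`, so the derivative is negative.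
The function is continuous at `1/2`, where it vanishes.
-/

open Real Filter Set

noncomputable def logGap (l : ℝ) : ℝ :=
  log (1 / l) - ((1 - l) / l) * log (1 / (1 - l))

lemma logGap_eq : logGap = fun l => (1 - l) / l * log (1 - l) - log l := by
  funext l
  simp only [logGap, one_div, log_inv]
  ring

lemma logGap_half : logGap (1 / 2) = 0 := by
  norm_num [logGap]

lemma hasDerivAt_logGap {x : ℝ} (hx : x ≠ 0) (hx₁ : 1 - x ≠ 0) :
    HasDerivAt logGap (-(2 * x + log (1 - x)) / x ^ 2) x := by
  have hsub : HasDerivAt (fun l : ℝ => 1 - l) (-1) x := by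
    simpa using (hasDerivAt_id x).const_sub 1
  have hratio : HasDerivAt (fun l : ℝ => (1 - l) / l) ((-1 * x - (1 - x) * 1) / x ^ 2) x :=
    hsub.div (hasDerivAt_id x) hx
  have hlog : HasDerivAt (fun l : ℝ => log (1 - l)) (-1 / (1 - x)) x := hsub.log hx₁
  rw [logGap_eq]
  refine ((hratio.mul hlog).sub (hasDerivAt_log hx)).congr_deriv ?_
  field_simp
  ring

lemma two_mul_add_log_one_sub_pos {x : ℝ} (hx₀ : 0 < x) (hx : x < 1 / 2) :
    0 < 2 * x + log (1 - x) := by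
  have hx₁ : 0 < 1 - x := by linarith
  have hlog := one_sub_inv_le_log_of_pos hx₁
  have hgap : 0 < 2 * x + (1 - (1 - x)⁻¹) := by
    have : 2 * x + (1 - (1 - x)⁻¹) = x * (1 - 2 * x) / (1 - x) := by
      field_simp
      ring
    rw [this]
    exact div_pos (mul_pos hx₀ (by linarith)) hx₁
  linarith

lemma strictAntiOn_logGap : StrictAntiOn logGap (Ioo 0 (1 / 2)) := by
  have hderiv : ∀ x ∈ Ioo (0 : ℝ) (1 / 2),
      HasDerivAt logGap (-(2 * x + log (1 - x)) / x ^ 2) x := fun x hx =>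
    hasDerivAt_logGap hx.1.ne' (by linarith [hx.2])
  refine strictAntiOn_of_hasDerivWithinAt_neg (f' := fun x => -(2 * x + log (1 - x)) / x ^ 2)
    (convex_Ioo 0 (1 / 2))
    (fun x hx => (hderiv x hx).continuousAt.continuousWithinAt) ?_ ?_ <;> rw [interior_Ioo]
  · exact fun x hx => (hderiv x hx).hasDerivWithinAt
  · exact fun x hx => div_neg_of_neg_of_pos
      (neg_neg_of_pos (two_mul_add_log_one_sub_pos hx.1 hx.2)) (pow_pos hx.1 2)

lemma tendsto_logGap_half : Tendsto logGap (nhds (1 / 2)) (nhds 0) := by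
  have hcont : ContinuousAt logGap (1 / 2) :=
    (hasDerivAt_logGap (by norm_num) (by norm_num)).continuousAt
  simpa only [logGap_half] using hcont.tendsto

theorem stmt_1 :
    StrictAntiOn
      (fun l : ℝ => Real.log (1 / l) - ((1 - l) / l) * Real.log (1 / (1 - l)))
      (Set.Ioo 0 (1 / 2)) ∧
    Filter.Tendsto
      (fun l : ℝ => Real.log (1 / l) - ((1 - l) / l) * Real.log (1 / (1 - l)))
      (nhdsWithin (1 / 2) (Set.Ioo 0 (1 / 2))) (nhds 0) :=
  ⟨strictAntiOn_logGap, tendsto_logGap_half.mono_left nhdsWithin_le_nhds⟩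
end

section
/- There exist a dimension d ≥ 1, finitely many feature vectors x_u ∈ ℝ^d for u in a set S with |S| ≥ 2, such that the positive-sample log-likelihood L(θ) = log(1 - ∏_{u∈S}(1 - σ(⟨θ, x_u⟩))) is not concave in θ. -/
open scoped RealInnerProductSpace

noncomputable def sigmoid (t : ℝ) : ℝ := 1 / (1 + Real.exp (-t))

/-!
Since `1 - σ t = σ (-t)`, the two activators `v` and `-v` give the product
`σ s * σ (-s) = 1 / (2 (1 + cosh s))` with `s = ⟪θ, v⟫`, which is maximal exactly at `s = 0`.
So the log-likelihood has a strict minimum `log (3/4)` at `θ = 0`, the midpoint of `v` and `-v`,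
which a concave function cannot have.
-/

lemma one_sub_sigmoid (t : ℝ) : 1 - sigmoid t = sigmoid (-t) := by
  rw [sigmoid, sigmoid, neg_neg, Real.exp_neg]
  field_simp
  ring

lemma sigmoid_mul_sigmoid_neg (t : ℝ) :
    sigmoid t * sigmoid (-t) = 1 / (2 * (1 + Real.cosh t)) := by
  rw [sigmoid, sigmoid, neg_neg, Real.cosh_eq, Real.exp_neg]
  field_simp
  ring

lemma sigmoid_mul_sigmoid_neg_lt {t : ℝ} (ht : t ≠ 0) : sigmoid t * sigmoid (-t) < 1 / 4 := by
  rw [sigmoid_mul_sigmoid_neg]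
  have := Real.one_lt_cosh.2 ht
  rw [div_lt_div_iff₀ (by positivity) (by norm_num)]
  linarith

lemma not_concaveOn_log_one_sub_prod_sigmoid {E : Type*} [NormedAddCommGroup E]
    [InnerProductSpace ℝ E] {v : E} (hv : v ≠ 0) :
    ¬ ConcaveOn ℝ Set.univ
      (fun θ : E => Real.log (1 - ∏ u, (1 - sigmoid ⟪θ, ![v, -v] u⟫))) := by
  set f : E → ℝ := fun θ => Real.log (1 - ∏ u, (1 - sigmoid ⟪θ, ![v, -v] u⟫))
  have hf : ∀ θ, f θ = Real.log (1 - sigmoid ⟪θ, v⟫ * sigmoid (-⟪θ, v⟫)) := by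
    intro θ
    simp only [f, Fin.prod_univ_two, Matrix.cons_val_zero, Matrix.cons_val_one,
      inner_neg_right, one_sub_sigmoid, neg_neg, mul_comm]
  have hf_zero : f 0 = Real.log (3 / 4) := by
    rw [hf, inner_zero_left, sigmoid_mul_sigmoid_neg, Real.cosh_zero]
    norm_num
  have hf_lt : ∀ θ, ⟪θ, v⟫ ≠ 0 → f 0 < f θ := fun θ hθ => by
    rw [hf_zero, hf]
    have := sigmoid_mul_sigmoid_neg_lt hθ
    exact Real.log_lt_log (by norm_num) (by linarith)
  intro hconc
  have hmin := hconc.ge_on_segment' (Set.mem_univ v) (Set.mem_univ (-v))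
    (by norm_num : (0 : ℝ) ≤ 1 / 2) (by norm_num : (0 : ℝ) ≤ 1 / 2) (by norm_num)
  rw [smul_neg, add_neg_cancel] at hmin
  have hvv : ⟪v, v⟫ ≠ 0 := inner_self_ne_zero.2 hv
  have hv_lt := hf_lt v hvv
  have hnegv_lt := hf_lt (-v) (by rwa [inner_neg_left, neg_ne_zero])
  rcases min_le_iff.1 hmin with h | h <;> linarith

theorem stmt_14 :
    ∃ (d n : ℕ) (x : Fin n → EuclideanSpace ℝ (Fin d)), 1 ≤ d ∧ 2 ≤ n ∧
      ¬ ConcaveOn ℝ Set.univ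
        (fun θ : EuclideanSpace ℝ (Fin d) =>
          Real.log (1 - ∏ u, (1 - sigmoid ⟪θ, x u⟫))) := by
  have hv : EuclideanSpace.single (0 : Fin 1) (1 : ℝ) ≠ 0 :=
    (PiLp.single_eq_zero_iff 2 0).not.2 one_ne_zero
  exact ⟨1, 2, _, le_rfl, le_rfl, not_concaveOn_log_one_sub_prod_sigmoid hv⟩
end

section
/- If F is a family of functions from a sample set S (of size m) to ℝ whose evaluation vectors form a set F(S) ⊆ ℝ^m, every f ∈ F(S) has ‖f‖_∞ ≤ C, and N is the ℓ_∞ ε-covering number of F(S), then the empirical Rademacher complexity satisfies R(F(S)) ≤ C·√(2 log N / m) + ε. -/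
/-!
Massart's lemma bounds the Rademacher average of a finite class `K` with `‖z‖₂² ≤ R` by
`√(2 R log #K)`: for `t > 0`, Jensen and bounding a maximum by a sum give
`exp (t 𝔼 sup) ≤ ∑_{z ∈ K} 𝔼 exp (t ⟨σ, z⟩)`, each summand factorizes as
`∏ cosh (t zᵢ) ≤ exp (t² R / 2)`, and optimizing over `t` gives the bound.
Clamping the centers of an `ε`-cover of `F(S)` to `[-C, C]` keeps it an `ε`-cover of no larger
size with `R = m C²`, and replacing each `f` by its center changes `⟨σ, f⟩` by at most `m ε`.
-/

open Finset Real
open scoped BigOperators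

lemma exp_expect_le_expect_exp {α : Type*} {s : Finset α} (hs : s.Nonempty) (f : α → ℝ) :
    exp (𝔼 a ∈ s, f a) ≤ 𝔼 a ∈ s, exp (f a) := by
  have hcard : (0 : ℝ) < #s := by exact_mod_cast hs.card_pos
  have h := convexOn_exp.map_sum_le (t := s) (w := fun _ => (#s : ℝ)⁻¹) (p := f)
    (fun _ _ => by positivity) (by simp [hcard.ne']) (fun _ _ => Set.mem_univ _)
  simpa only [expect_eq_sum_div_card, div_eq_inv_mul, mul_sum, smul_eq_mul] using h

lemma le_sqrt_of_forall_mul_le {A a b : ℝ} (h : ∀ t > 0, t * A ≤ a + t ^ 2 * b / 2) :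
    A ≤ √(2 * a * b) := by
  rcases le_or_gt A 0 with hA | hA
  · exact hA.trans (sqrt_nonneg _)
  rcases le_or_gt b 0 with hb | hb
  · have := h ((|a| + 1) / A) (by positivity)
    rw [div_mul_cancel₀ _ hA.ne'] at this
    nlinarith [le_abs_self a, sq_nonneg ((|a| + 1) / A)]
  · refine le_sqrt_of_sq_le ?_
    have := h (A / b) (div_pos hA hb)
    field_simp at this
    linarith

lemma exp_mul_sup'_le_sum_exp {α : Type*} {K : Finset α} (hK : K.Nonempty) (g : α → ℝ)
    (t : ℝ) :
    exp (t * K.sup' hK g) ≤ ∑ z ∈ K, exp (t * g z) := by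
  obtain ⟨z, hz, hmax⟩ := exists_mem_eq_sup' hK g
  rw [hmax]
  exact single_le_sum (f := fun z => exp (t * g z)) (fun _ _ => (exp_pos _).le) hz

variable {ι : Type*} [Fintype ι]

def signedSum (b : ι → Bool) (z : ι → ℝ) : ℝ := ∑ i, (if b i then 1 else -1) * z i

lemma signedSum_le_add_of_forall_abs_sub_le (b : ι → Bool) {f z : ι → ℝ} {ε : ℝ}
    (h : ∀ i, |f i - z i| ≤ ε) : signedSum b f ≤ signedSum b z + Fintype.card ι * ε := by
  have hterm : ∀ i, (if b i then 1 else -1) * f i ≤ (if b i then 1 else -1) * z i + ε := by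
    intro i
    have := abs_le.1 (h i)
    split <;> linarith
  calc signedSum b f ≤ ∑ i, ((if b i then 1 else -1) * z i + ε) :=
        sum_le_sum fun i _ => hterm i
    _ = signedSum b z + Fintype.card ι * ε := by
        rw [sum_add_distrib, sum_const, card_univ, nsmul_eq_mul, signedSum]

lemma sum_sq_le_of_forall_abs_le {z : ι → ℝ} {C : ℝ} (h : ∀ i, |z i| ≤ C) :
    ∑ i, z i ^ 2 ≤ Fintype.card ι * C ^ 2 := by
  simpa using sum_le_card_nsmul univ (fun i => z i ^ 2) (C ^ 2) fun i _ =>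
    sq_le_sq' (abs_le.1 (h i)).1 (abs_le.1 (h i)).2

lemma exists_bounded_cover_of_abs_le {F Z : Finset (ι → ℝ)} {C ε : ℝ} (hC : 0 ≤ C)
    (hbound : ∀ f ∈ F, ∀ i, |f i| ≤ C)
    (hcover : ∀ f ∈ F, ∃ z ∈ Z, ∀ i, |f i - z i| ≤ ε) :
    ∃ K : Finset (ι → ℝ), #K ≤ #Z ∧ (∀ z ∈ K, ∀ i, |z i| ≤ C) ∧
      ∀ f ∈ F, ∃ z ∈ K, ∀ i, |f i - z i| ≤ ε := by
  classical
  let clamp : ℝ → ℝ := fun x => Set.projIcc (-C) C (by linarith) x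
  refine ⟨Z.image fun z i => clamp (z i), card_image_le, ?_, fun f hf => ?_⟩
  · simp only [mem_image]
    rintro _ ⟨z, -, rfl⟩ i
    exact abs_le.2 (Set.projIcc (-C) C _ (z i)).2
  · obtain ⟨z, hz, hfz⟩ := hcover f hf
    refine ⟨_, mem_image_of_mem _ hz, fun i => ?_⟩
    have hfi : f i ∈ Set.Icc (-C) C := abs_le.1 (hbound f hf i)
    calc |f i - clamp (z i)| = |clamp (f i) - clamp (z i)| := by
          simp only [clamp, Set.projIcc_of_mem _ hfi]
      _ ≤ |f i - z i| := Set.abs_projIcc_sub_projIcc _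
      _ ≤ ε := hfz i

variable [DecidableEq ι]

lemma expect_sup'_signedSum_le_of_cover {F K : Finset (ι → ℝ)} (hF : F.Nonempty)
    (hK : K.Nonempty) {ε : ℝ} (hcover : ∀ f ∈ F, ∃ z ∈ K, ∀ i, |f i - z i| ≤ ε) :
    𝔼 b, F.sup' hF (signedSum b) ≤ 𝔼 b, K.sup' hK (signedSum b) + Fintype.card ι * ε := by
  have hpointwise (b : ι → Bool) :
      F.sup' hF (signedSum b) ≤ K.sup' hK (signedSum b) + Fintype.card ι * ε := by
    refine sup'_le _ _ fun f hf => ?_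
    obtain ⟨z, hz, hfz⟩ := hcover f hf
    exact (signedSum_le_add_of_forall_abs_sub_le b hfz).trans <|
      add_le_add_left (le_sup' (signedSum b) hz) _
  calc 𝔼 b, F.sup' hF (signedSum b)
      ≤ 𝔼 b, (K.sup' hK (signedSum b) + Fintype.card ι * ε) :=
        expect_le_expect fun b _ => hpointwise b
    _ = 𝔼 b, K.sup' hK (signedSum b) + Fintype.card ι * ε := by
        rw [expect_add_distrib, expect_const univ_nonempty]

lemma expect_pi_bool (g : (ι → Bool) → ℝ) :
    𝔼 b, g b = 1 / 2 ^ Fintype.card ι * ∑ b, g b := by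
  rw [Fintype.expect_eq_sum_div_card, Fintype.card_fun, Fintype.card_bool, Nat.cast_pow,
    Nat.cast_ofNat, one_div, ← div_eq_inv_mul]

lemma sum_exp_mul_signedSum (t : ℝ) (z : ι → ℝ) :
    ∑ b : ι → Bool, exp (t * signedSum b z) = ∏ i, 2 * cosh (t * z i) := by
  simp only [signedSum, mul_sum, exp_sum]
  rw [← Fintype.prod_sum (fun i (y : Bool) => exp (t * ((if y then 1 else -1) * z i)))]
  refine prod_congr rfl fun i _ => ?_
  rw [Fintype.sum_bool, cosh_eq]
  simp only [Bool.false_eq_true, ↓reduceIte, one_mul, neg_one_mul, mul_neg]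
  ring

lemma expect_exp_mul_signedSum_le (t : ℝ) (z : ι → ℝ) :
    𝔼 b : ι → Bool, exp (t * signedSum b z) ≤ exp (t ^ 2 * (∑ i, z i ^ 2) / 2) := by
  rw [Fintype.expect_eq_sum_div_card, sum_exp_mul_signedSum, prod_mul_distrib, prod_const,
    Fintype.card_fun, Fintype.card_bool, card_univ, Nat.cast_pow, Nat.cast_ofNat,
    mul_div_cancel_left₀ _ (by positivity)]
  calc ∏ i, cosh (t * z i) ≤ ∏ i, exp ((t * z i) ^ 2 / 2) :=
        prod_le_prod (fun i _ => (cosh_pos _).le) fun i _ => cosh_le_exp_half_sq _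
    _ = exp (t ^ 2 * (∑ i, z i ^ 2) / 2) := by
        rw [← exp_sum, mul_sum, sum_div]
        simp only [mul_pow]

theorem expect_sup'_signedSum_le (K : Finset (ι → ℝ)) (hK : K.Nonempty) {R : ℝ}
    (hR : ∀ z ∈ K, ∑ i, z i ^ 2 ≤ R) :
    𝔼 b, K.sup' hK (signedSum b) ≤ √(2 * log #K * R) := by
  refine le_sqrt_of_forall_mul_le fun t ht => ?_
  have hexp : exp (t * 𝔼 b, K.sup' hK (signedSum b)) ≤ #K * exp (t ^ 2 * R / 2) :=
    calc exp (t * 𝔼 b, K.sup' hK (signedSum b))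
        ≤ 𝔼 b, exp (t * K.sup' hK (signedSum b)) := by
          rw [mul_expect]; exact exp_expect_le_expect_exp univ_nonempty _
      _ ≤ 𝔼 b, ∑ z ∈ K, exp (t * signedSum b z) :=
          expect_le_expect fun b _ => exp_mul_sup'_le_sum_exp hK (signedSum b) t
      _ = ∑ z ∈ K, 𝔼 b, exp (t * signedSum b z) := expect_sum_comm _ _ _
      _ ≤ ∑ z ∈ K, exp (t ^ 2 * R / 2) := sum_le_sum fun z hz =>
          (expect_exp_mul_signedSum_le t z).trans <| exp_le_exp.2 <| by gcongr; exact hR z hz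
      _ = #K * exp (t ^ 2 * R / 2) := by rw [sum_const, nsmul_eq_mul]
  have hK' : (0 : ℝ) < #K := by exact_mod_cast hK.card_pos
  simpa only [log_exp, log_mul hK'.ne' (exp_pos _).ne'] using log_le_log (exp_pos _) hexp

theorem stmt_16_general (m : ℕ) (hm : 1 ≤ m) (C ε : ℝ) (hC : 0 ≤ C)
    (F : Finset (Fin m → ℝ)) (hF : F.Nonempty)
    (hbound : ∀ f ∈ F, ∀ i, |f i| ≤ C)
    (Z : Finset (Fin m → ℝ))
    (hcover : ∀ f ∈ F, ∃ z ∈ Z, ∀ i, |f i - z i| ≤ ε)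
    (N : ℕ) (hN : N = Z.card) :
    (1 / (m : ℝ)) * ((1 / 2 ^ m) *
        ∑ b : Fin m → Bool,
          F.sup' hF (fun f => ∑ i, (if b i then (1 : ℝ) else -1) * f i))
      ≤ C * Real.sqrt (2 * Real.log N / m) + ε := by
  obtain ⟨K, hKZ, hKbound, hKcover⟩ := exists_bounded_cover_of_abs_le hC hbound hcover
  have hK : K.Nonempty := let ⟨z, hz, _⟩ := hKcover _ hF.choose_spec; ⟨z, hz⟩
  have hm0 : (0 : ℝ) < m := by exact_mod_cast hm
  have hnorm (z) (hz : z ∈ K) : ∑ i, z i ^ 2 ≤ m * C ^ 2 := by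
    simpa using sum_sq_le_of_forall_abs_le (hKbound z hz)
  have hlog : log #K ≤ log N :=
    log_le_log (by exact_mod_cast hK.card_pos) (by rw [hN]; exact_mod_cast hKZ)
  have hsqrt : √(2 * log N * (m * C ^ 2)) = m * (C * √(2 * log N / m)) := by
    rw [show 2 * log N * (m * C ^ 2) = (m * C) ^ 2 * (2 * log N / m) by field_simp,
      sqrt_mul (sq_nonneg _), sqrt_sq (by positivity), mul_assoc]
  calc _ = 1 / (m : ℝ) * 𝔼 b, F.sup' hF (signedSum b) := by
        rw [expect_pi_bool, Fintype.card_fin]; rfl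
    _ ≤ 1 / m * (𝔼 b, K.sup' hK (signedSum b) + m * ε) := by
        gcongr
        simpa using expect_sup'_signedSum_le_of_cover hF hK hKcover
    _ ≤ 1 / m * (√(2 * log N * (m * C ^ 2)) + m * ε) := by
        gcongr
        exact (expect_sup'_signedSum_le K hK hnorm).trans (by gcongr)
    _ = C * √(2 * log N / m) + ε := by
        rw [hsqrt]
        field_simp

theorem stmt_16 (m : ℕ) (hm : 1 ≤ m) (C ε : ℝ) (hC : 0 ≤ C) (hε : 0 ≤ ε)
    (F : Finset (Fin m → ℝ)) (hF : F.Nonempty)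
    (hbound : ∀ f ∈ F, ∀ i, |f i| ≤ C)
    (Z : Finset (Fin m → ℝ))
    (hcover : ∀ f ∈ F, ∃ z ∈ Z, ∀ i, |f i - z i| ≤ ε)
    (N : ℕ) (hN : N = Z.card) :
    (1 / (m : ℝ)) * ((1 / 2 ^ m) *
        ∑ b : Fin m → Bool,
          F.sup' hF (fun f => ∑ i, (if b i then (1 : ℝ) else -1) * f i))
      ≤ C * Real.sqrt (2 * Real.log N / m) + ε :=
  stmt_16_general m hm C ε hC F hF hbound Z hcover N hN
end
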